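/- arXiv:1501.03571 — 6 statements merged into one kernel-verified Lean document; each statement's English description precedes it below -/
import Mathlib

section
/- For each sample size $n$, let $\mathcal{G}_n$ be the $\sigma$-algebra generated by $(X_1,\dots,X_n,T_1,\dots,T_n)$, and let $w^{(n)} = (w_i^{(n)})_{T_i=0}$ be $\mathcal{G}_n$-measurable control weights satisfying $w_i^{(n)} \ge 0$, $\sum_{T_i=0} w_i^{(n)} = 1$, and the balancing constraints $\sum_{T_i=0} w_i^{(n)} c(X_i) = \bar c^{(n)}(1)$ where $\bar c^{(n)}(1) = \frac{1}{n_1}\sum_{T_i=1} c(X_i)$. Suppose: (i) conditionally on $\mathcal{G}_n$, the outcomes satisfy $Y_i = \beta^T c(X_i) + \epsilon_i$ for control units, where the $\epsilon_i$ have conditional mean zero, conditional variances bounded by $\sigma^2 < \infty$, and are conditionally uncorrelated; (ii) $\sum_{T_i=0} (w_i^{(n)})^2 \to 0$ in probability as $n \to \infty$; and (iii) $\bar c^{(n)}(1) \to \mu_1 \in \mathbb{R}^p$ in probability. Then $\sum_{T_i=0} w_i^{(n)} Y_i \to \beta^T \mu_1$ in probability as $n \to \infty$. -/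
/-! On the control units, `∑ wᵢ Yᵢ = ∑ wᵢ εᵢ + β ⬝ ∑ wᵢ c(Xᵢ)`, and by the balancing constraints
the second term is `β ⬝ c̄⁽ⁿ⁾(1) → β ⬝ μ₁`. The weights lie in the simplex, so they are bounded
and `𝒢ₙ`-measurable and can be pulled out of conditional expectations: the cross terms of
`E[(∑ wᵢ εᵢ)²]` vanish and the diagonal ones are at most `σ² E[wᵢ²]`, whence
`E[(∑ wᵢ εᵢ)²] ≤ σ² E[∑ wᵢ²]`. As `0 ≤ ∑ wᵢ² ≤ 1`, its convergence to `0` in probability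
gives `E[∑ wᵢ²] → 0` by bounded convergence, and Chebyshev's inequality shows
`∑ wᵢ εᵢ → 0` in probability. -/

open MeasureTheory Finset Filter

open scoped Topology

namespace MeasureTheory

variable {Ω ι E : Type*} {m m0 : MeasurableSpace Ω} {μ : Measure Ω} {l : Filter ι}

theorem tendstoInMeasure_const [PseudoEMetricSpace E] (g : Ω → E) :
    TendstoInMeasure μ (fun _ : ι => g) l g := fun ε hε => by
  simpa [hε.ne'] using tendsto_const_nhds

namespace TendstoInMeasure

variable [SeminormedAddCommGroup E] {f f' : ι → Ω → E} {g g' : Ω → E}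

theorem add (hf : TendstoInMeasure μ f l g) (hf' : TendstoInMeasure μ f' l g') :
    TendstoInMeasure μ (fun i ω => f i ω + f' i ω) l (fun ω => g ω + g' ω) := by
  rw [tendstoInMeasure_iff_dist] at hf hf' ⊢
  intro ε hε
  have hsum := (hf (ε / 2) (half_pos hε)).add (hf' (ε / 2) (half_pos hε))
  rw [add_zero] at hsum
  refine tendsto_of_tendsto_of_tendsto_of_le_of_le tendsto_const_nhds hsum
    (fun _ => zero_le) (fun i => (measure_mono fun ω hω => ?_).trans (measure_union_le _ _))
  by_contra! h
  have := dist_add_add_le (f i ω) (f' i ω) (g ω) (g' ω)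
  simp only [Set.mem_ofPred_eq, Set.mem_union, not_or, not_le] at hω h
  linarith [h.1, h.2]

theorem const_smul {𝕜 : Type*} [NormedField 𝕜] [NormedSpace 𝕜 E]
    (hf : TendstoInMeasure μ f l g) (r : 𝕜) :
    TendstoInMeasure μ (fun i ω => r • f i ω) l (fun ω => r • g ω) := by
  rcases eq_or_ne r 0 with rfl | hr
  · simp only [zero_smul]
    exact tendstoInMeasure_const _
  rw [tendstoInMeasure_iff_dist] at hf ⊢
  intro ε hε
  convert hf (ε / ‖r‖) (div_pos hε (norm_pos_iff.mpr hr)) using 4 with i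
  ext ω
  rw [dist_smul₀, div_le_iff₀ (norm_pos_iff.mpr hr), mul_comm]

theorem finset_sum {κ : Type*} (s : Finset κ) {f : κ → ι → Ω → E} {g : κ → Ω → E}
    (hf : ∀ j ∈ s, TendstoInMeasure μ (f j) l (g j)) :
    TendstoInMeasure μ (fun i ω => ∑ j ∈ s, f j i ω) l (fun ω => ∑ j ∈ s, g j ω) := by
  classical
  induction s using Finset.induction_on with
  | empty =>
    simp only [sum_empty]
    exact tendstoInMeasure_const _
  | insert j s hj ih =>
    simp only [Finset.sum_insert hj]
    exact (hf j (mem_insert_self j s)).add (ih fun k hk => hf k (mem_insert_of_mem hk))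

end TendstoInMeasure

theorem tendstoInMeasure_zero_of_tendsto_integral_sq [IsFiniteMeasure μ] {f : ι → Ω → ℝ}
    (hf : ∀ i, Integrable (fun ω => f i ω ^ 2) μ)
    (h : Tendsto (fun i => ∫ ω, f i ω ^ 2 ∂μ) l (𝓝 0)) :
    TendstoInMeasure μ f l 0 := by
  rw [tendstoInMeasure_iff_measureReal_dist]
  intro ε hε
  have hbound : ∀ i, μ.real {ω | ε ≤ dist (f i ω) 0} ≤ (∫ ω, f i ω ^ 2 ∂μ) / ε ^ 2 := by
    intro i
    rw [le_div_iff₀ (by positivity), mul_comm]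
    refine le_trans ?_ (mul_meas_ge_le_integral_of_nonneg
      (Eventually.of_forall fun ω => sq_nonneg (f i ω)) (hf i) (ε ^ 2))
    refine mul_le_mul_of_nonneg_left (measureReal_mono fun ω hω => ?_) (by positivity)
    simp only [Set.mem_ofPred_eq, Real.dist_eq, sub_zero] at hω ⊢
    nlinarith [abs_nonneg (f i ω), sq_abs (f i ω)]
  refine squeeze_zero (fun i => measureReal_nonneg) hbound ?_
  simpa using h.div_const (ε ^ 2)

theorem tendsto_integral_of_tendstoInMeasure_of_norm_le [NormedAddCommGroup E] [NormedSpace ℝ E]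
    [IsFiniteMeasure μ] {f : ℕ → Ω → E} {g : Ω → E} (hf : ∀ n, AEStronglyMeasurable (f n) μ)
    {C : ℝ} (hC : ∀ n, ∀ᵐ ω ∂μ, ‖f n ω‖ ≤ C) (hfg : TendstoInMeasure μ f atTop g) :
    Tendsto (fun n => ∫ ω, f n ω ∂μ) atTop (𝓝 (∫ ω, g ω ∂μ)) := by
  refine tendsto_of_subseq_tendsto fun ns hns => ?_
  obtain ⟨ms, -, hms⟩ := (hfg.comp hns).exists_seq_tendsto_ae
  exact ⟨ms, tendsto_integral_of_dominated_convergence (fun _ => C) (fun _ => hf _)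
    (integrable_const C) (fun _ => hC _) hms⟩

theorem measurable_biSup_comap {β : Type*} [mβ : MeasurableSpace β] (s : Finset ι)
    (f : ι → Ω → β) {i : ι} (hi : i ∈ s) :
    Measurable[⨆ j ∈ s, MeasurableSpace.comap (f j) mβ] (f i) :=
  measurable_iff_comap_le.mpr (le_iSup₂ (f := fun j (_ : j ∈ s) => (mβ.comap (f j))) i hi)

section SecondMoment

theorem integral_mul_eq_integral_mul_condExp [IsFiniteMeasure μ] (hm : m ≤ m0) {f g : Ω → ℝ}
    (hf : StronglyMeasurable[m] f) {C : ℝ} (hfC : ∀ᵐ ω ∂μ, ‖f ω‖ ≤ C) (hg : Integrable g μ) :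
    ∫ ω, f ω * g ω ∂μ = ∫ ω, f ω * μ[g | m] ω ∂μ := by
  rw [← integral_condExp hm]
  exact integral_congr_ae (condExp_stronglyMeasurable_mul_of_bound hm hf hg C hfC)

theorem integrable_mul_mul_of_abs_le_one {a b e e' : Ω → ℝ}
    (ha : AEStronglyMeasurable a μ) (hb : AEStronglyMeasurable b μ)
    (ha1 : ∀ᵐ ω ∂μ, |a ω| ≤ 1) (hb1 : ∀ᵐ ω ∂μ, |b ω| ≤ 1)
    (hee' : Integrable (fun ω => e ω * e' ω) μ) :
    Integrable (fun ω => a ω * e ω * (b ω * e' ω)) μ := by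
  have hab : ∀ᵐ ω ∂μ, ‖a ω * b ω‖ ≤ 1 := by
    filter_upwards [ha1, hb1] with ω ha1 hb1
    rw [Real.norm_eq_abs, abs_mul]
    exact mul_le_one₀ ha1 (abs_nonneg _) hb1
  exact (hee'.bdd_mul (ha.mul hb) hab).congr
    (Eventually.of_forall fun ω => by simp only [Pi.mul_apply]; ring)

variable (s : Finset ι) {v e : ι → Ω → ℝ}

theorem integrable_sq_sum_mul (hm : m ≤ m0) (hv : ∀ i ∈ s, Measurable[m] (v i))
    (hv1 : ∀ i ∈ s, ∀ᵐ ω ∂μ, |v i ω| ≤ 1)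
    (hee : ∀ i ∈ s, ∀ k ∈ s, Integrable (fun ω => e i ω * e k ω) μ) :
    Integrable (fun ω => (∑ i ∈ s, v i ω * e i ω) ^ 2) μ := by
  simp_rw [sq, sum_mul_sum]
  exact integrable_finsetSum _ fun i hi => integrable_finsetSum _ fun k hk =>
    integrable_mul_mul_of_abs_le_one ((hv i hi).mono hm le_rfl).aestronglyMeasurable
      ((hv k hk).mono hm le_rfl).aestronglyMeasurable (hv1 i hi) (hv1 k hk) (hee i hi k hk)

theorem integral_sq_sum_mul_le [IsFiniteMeasure μ] (hm : m ≤ m0)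
    (hv : ∀ i ∈ s, Measurable[m] (v i))
    (hv1 : ∀ i ∈ s, ∀ᵐ ω ∂μ, |v i ω| ≤ 1)
    (hee : ∀ i ∈ s, ∀ k ∈ s, Integrable (fun ω => e i ω * e k ω) μ) {σ2 : ℝ}
    (hvar : ∀ i ∈ s, ∀ᵐ ω ∂μ, μ[fun ω => e i ω ^ 2 | m] ω ≤ σ2)
    (huncorr : ∀ i ∈ s, ∀ k ∈ s, i ≠ k → μ[fun ω => e i ω * e k ω | m] =ᵐ[μ] 0) :
    ∫ ω, (∑ i ∈ s, v i ω * e i ω) ^ 2 ∂μ ≤ σ2 * ∫ ω, ∑ i ∈ s, v i ω ^ 2 ∂μ := by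
  have hpair_int : ∀ i ∈ s, ∀ k ∈ s, Integrable (fun ω => v i ω * e i ω * (v k ω * e k ω)) μ :=
    fun i hi k hk => integrable_mul_mul_of_abs_le_one
      ((hv i hi).mono hm le_rfl).aestronglyMeasurable
      ((hv k hk).mono hm le_rfl).aestronglyMeasurable (hv1 i hi) (hv1 k hk) (hee i hi k hk)
  have hv2_int : ∀ i ∈ s, Integrable (fun ω => v i ω ^ 2) μ := fun i hi => by
    refine (integrable_const (1 : ℝ)).mono'
      (((hv i hi).mono hm le_rfl).pow_const 2).aestronglyMeasurable ?_
    filter_upwards [hv1 i hi] with ω hω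
    rw [Real.norm_eq_abs, abs_pow]
    exact pow_le_one₀ (abs_nonneg _) hω
  have hvv : ∀ i ∈ s, ∀ k ∈ s, ∀ᵐ ω ∂μ, ‖v i ω * v k ω‖ ≤ 1 := fun i hi k hk => by
    filter_upwards [hv1 i hi, hv1 k hk] with ω hvi hvk
    rw [Real.norm_eq_abs, abs_mul]
    exact mul_le_one₀ hvi (abs_nonneg _) hvk
  have hpair : ∀ i ∈ s, ∀ k ∈ s, ∫ ω, v i ω * e i ω * (v k ω * e k ω) ∂μ
      = ∫ ω, v i ω * v k ω * μ[fun ω => e i ω * e k ω | m] ω ∂μ := fun i hi k hk => by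
    rw [← integral_mul_eq_integral_mul_condExp (f := fun ω => v i ω * v k ω) hm
      ((hv i hi).mul (hv k hk)).stronglyMeasurable (hvv i hi k hk) (hee i hi k hk)]
    exact integral_congr_ae (Eventually.of_forall fun ω => by ring)
  have hoff : ∀ i ∈ s, ∀ k ∈ s, i ≠ k → ∫ ω, v i ω * e i ω * (v k ω * e k ω) ∂μ = 0 :=
    fun i hi k hk hik => by
      rw [hpair i hi k hk]
      refine integral_eq_zero_of_ae ?_
      filter_upwards [huncorr i hi k hk hik] with ω hω
      simp [hω]
  have hdiag : ∀ i ∈ s, ∫ ω, v i ω * e i ω * (v i ω * e i ω) ∂μ ≤ σ2 * ∫ ω, v i ω ^ 2 ∂μ :=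
    fun i hi => by
      have hbound : ∀ᵐ ω ∂μ,
          v i ω * v i ω * μ[fun ω => e i ω * e i ω | m] ω ≤ σ2 * v i ω ^ 2 := by
        filter_upwards [hvar i hi] with ω hω
        simp_rw [← sq] at hω ⊢
        nlinarith [sq_nonneg (v i ω)]
      rw [hpair i hi i hi, ← integral_const_mul]
      exact integral_mono_ae (integrable_condExp.bdd_mul
        (((hv i hi).mul (hv i hi)).mono hm le_rfl).aestronglyMeasurable (hvv i hi i hi))
        ((hv2_int i hi).const_mul σ2) hbound
  calc ∫ ω, (∑ i ∈ s, v i ω * e i ω) ^ 2 ∂μ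
      = ∑ i ∈ s, ∑ k ∈ s, ∫ ω, v i ω * e i ω * (v k ω * e k ω) ∂μ := by
        simp_rw [sq, sum_mul_sum]
        rw [integral_finsetSum _ fun i hi => integrable_finsetSum _ (hpair_int i hi)]
        exact sum_congr rfl fun i hi => integral_finsetSum _ (hpair_int i hi)
    _ ≤ ∑ i ∈ s, σ2 * ∫ ω, v i ω ^ 2 ∂μ := by
        refine sum_le_sum fun i hi => ?_
        rw [sum_eq_single_of_mem i hi fun k hk hki => hoff i hi k hk (Ne.symm hki)]
        exact hdiag i hi
    _ = σ2 * ∫ ω, ∑ i ∈ s, v i ω ^ 2 ∂μ := by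
        rw [← mul_sum, integral_finsetSum _ hv2_int]

end SecondMoment

theorem tendstoInMeasure_sum_mul_of_condUncorrelated [IsFiniteMeasure μ]
    {𝒢 : ℕ → MeasurableSpace Ω} (h𝒢 : ∀ n, 𝒢 n ≤ m0) (s : ℕ → Finset ι)
    {v : ℕ → ι → Ω → ℝ} {e : ι → Ω → ℝ} {σ2 : ℝ}
    (hv : ∀ n, ∀ i ∈ s n, Measurable[𝒢 n] (v n i)) (hv0 : ∀ n i ω, 0 ≤ v n i ω)
    (hv1 : ∀ n, ∀ᵐ ω ∂μ, ∑ i ∈ s n, v n i ω = 1)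
    (hee : ∀ i k, Integrable (fun ω => e i ω * e k ω) μ)
    (hvar : ∀ n, ∀ i ∈ s n, ∀ᵐ ω ∂μ, μ[fun ω => e i ω ^ 2 | 𝒢 n] ω ≤ σ2)
    (huncorr : ∀ n, ∀ i ∈ s n, ∀ k ∈ s n, i ≠ k → μ[fun ω => e i ω * e k ω | 𝒢 n] =ᵐ[μ] 0)
    (hv2 : TendstoInMeasure μ (fun n ω => ∑ i ∈ s n, v n i ω ^ 2) atTop (fun _ => 0)) :
    TendstoInMeasure μ (fun n ω => ∑ i ∈ s n, v n i ω * e i ω) atTop (fun _ => 0) := by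
  have hv_le : ∀ n, ∀ i ∈ s n, ∀ᵐ ω ∂μ, |v n i ω| ≤ 1 := fun n i hi => by
    filter_upwards [hv1 n] with ω hω
    rw [abs_of_nonneg (hv0 n i ω), ← hω]
    exact single_le_sum (fun k _ => hv0 n k ω) hi
  have hv2_le : ∀ n, ∀ᵐ ω ∂μ, ‖∑ i ∈ s n, v n i ω ^ 2‖ ≤ 1 := fun n => by
    filter_upwards [hv1 n] with ω hω
    rw [Real.norm_of_nonneg (sum_nonneg fun i _ => sq_nonneg _)]
    simpa [hω] using sum_sq_le_sq_sum_of_nonneg (s := s n) fun i _ => hv0 n i ω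
  have hv2_meas : ∀ n, AEStronglyMeasurable (fun ω => ∑ i ∈ s n, v n i ω ^ 2) μ := fun n =>
    (Finset.measurable_sum _ fun i hi => ((hv n i hi).mono (h𝒢 n) le_rfl).pow_const 2)
      |>.aestronglyMeasurable
  have hv2_integral : Tendsto (fun n => ∫ ω, ∑ i ∈ s n, v n i ω ^ 2 ∂μ) atTop (𝓝 0) := by
    simpa using tendsto_integral_of_tendstoInMeasure_of_norm_le hv2_meas hv2_le hv2
  refine tendstoInMeasure_zero_of_tendsto_integral_sq
    (fun n => integrable_sq_sum_mul (s n) (h𝒢 n) (hv n) (hv_le n) fun i _ k _ => hee i k) ?_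
  refine squeeze_zero (fun n => integral_nonneg fun ω => sq_nonneg _)
    (fun n => integral_sq_sum_mul_le (s n) (h𝒢 n) (hv n) (hv_le n) (fun i _ k _ => hee i k)
      (hvar n) (huncorr n)) ?_
  simpa using hv2_integral.const_mul σ2

end MeasureTheory

theorem Finset.sum_filter_mul_eq_sum_ite_mul_add {ι κ : Type*} (s : Finset ι) (p : ι → Prop)
    [DecidablePred p] (t : Finset κ) (w y : ι → ℝ) (x : κ → ι → ℝ) (β : κ → ℝ) :
    ∑ i ∈ s.filter p, w i * y i
      = ∑ i ∈ s, (if p i then w i else 0) * (if p i then y i - ∑ j ∈ t, β j * x j i else 0)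
        + ∑ j ∈ t, β j * ∑ i ∈ s.filter p, w i * x j i := by
  simp_rw [ite_zero_mul_ite_zero, and_self, ← sum_filter, mul_sum]
  rw [sum_comm (s := t), ← sum_add_distrib]
  refine sum_congr rfl fun i _ => ?_
  simp_rw [mul_sub, mul_sum, mul_left_comm (w i)]
  ring

theorem stmt_3_general {Ω 𝓧 : Type*} [m0 : MeasurableSpace Ω] [MeasurableSpace 𝓧]
    (μ : Measure Ω) [IsProbabilityMeasure μ]
    {p : ℕ} (X : ℕ → Ω → 𝓧) (T : ℕ → Ω → Bool) (Y : ℕ → Ω → ℝ)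
    (c : Fin p → 𝓧 → ℝ) (β : Fin p → ℝ) (σ2 : ℝ)
    (𝒢 : ℕ → MeasurableSpace Ω)
    (h𝒢 : ∀ n, 𝒢 n = (⨆ i ∈ Finset.range n, MeasurableSpace.comap (X i) inferInstance)
              ⊔ (⨆ i ∈ Finset.range n, MeasurableSpace.comap (T i) inferInstance))
    (hle : ∀ n, 𝒢 n ≤ m0)
    (w : ℕ → ℕ → Ω → ℝ)
    (hwmeas : ∀ n i, Measurable[𝒢 n] (w n i))
    (hw0 : ∀ n i ω, 0 ≤ w n i ω)
    (hwsum : ∀ n, ∀ᵐ ω ∂μ,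
      ∑ i ∈ (Finset.range n).filter (fun i => T i ω = false), w n i ω = 1)
    (hbal : ∀ n, ∀ᵐ ω ∂μ, ∀ j,
      ∑ i ∈ (Finset.range n).filter (fun i => T i ω = false), w n i ω * c j (X i ω)
        = ((((Finset.range n).filter (fun i => T i ω = true)).card : ℝ))⁻¹ *
            ∑ i ∈ (Finset.range n).filter (fun i => T i ω = true), c j (X i ω))
    -- integrability of the control residuals and their products
    (hεprodint : ∀ i k, Integrable
      (fun ω => (if T i ω = false then Y i ω - ∑ j, β j * c j (X i ω) else 0) *
        (if T k ω = false then Y k ω - ∑ j, β j * c j (X k ω) else 0)) μ)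
    -- (i) conditional mean zero, bounded conditional variance, conditionally uncorrelated
    (hvar : ∀ n, ∀ i < n, ∀ᵐ ω ∂μ,
      (μ[fun ω' => (if T i ω' = false then Y i ω' - ∑ j, β j * c j (X i ω') else 0) ^ 2 | 𝒢 n]) ω
        ≤ σ2)
    (huncorr : ∀ n, ∀ i < n, ∀ k < n, i ≠ k →
      μ[fun ω => (if T i ω = false then Y i ω - ∑ j, β j * c j (X i ω) else 0) *
          (if T k ω = false then Y k ω - ∑ j, β j * c j (X k ω) else 0) | 𝒢 n]
        =ᵐ[μ] 0)
    -- (ii) sum of squared weights tends to zero in probability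
    (hw2 : TendstoInMeasure μ
      (fun n ω => ∑ i ∈ (Finset.range n).filter (fun i => T i ω = false), (w n i ω) ^ 2)
      atTop (fun _ => 0))
    -- (iii) the treated moment average converges in probability to μ1
    (μ1 : Fin p → ℝ)
    (hcbar : ∀ j, TendstoInMeasure μ
      (fun n ω => ((((Finset.range n).filter (fun i => T i ω = true)).card : ℝ))⁻¹ *
        ∑ i ∈ (Finset.range n).filter (fun i => T i ω = true), c j (X i ω))
      atTop (fun _ => μ1 j)) :
    TendstoInMeasure μ
      (fun n ω => ∑ i ∈ (Finset.range n).filter (fun i => T i ω = false), w n i ω * Y i ω)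
      atTop (fun _ => ∑ j, β j * μ1 j) := by
  -- extended by zero to the treated units, so that all sums run over the deterministic `range n`
  set e : ℕ → Ω → ℝ := fun i ω => if T i ω = false then Y i ω - ∑ j, β j * c j (X i ω) else 0
  set v : ℕ → ℕ → Ω → ℝ := fun n i ω => if T i ω = false then w n i ω else 0
  have hcontrol : ∀ n, ∀ i ∈ range n, MeasurableSet[𝒢 n] {ω | T i ω = false} := fun n i hi => by
    rw [h𝒢 n]
    exact (measurable_biSup_comap _ T hi).mono le_sup_right le_rfl (measurableSet_singleton false)
  have hM : TendstoInMeasure μ (fun n ω => ∑ i ∈ range n, v n i ω * e i ω) atTop (fun _ => 0) :=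
    tendstoInMeasure_sum_mul_of_condUncorrelated hle range
      (fun n i hi => (hwmeas n i).ite (hcontrol n i hi) measurable_const)
      (fun n i ω => by by_cases h : T i ω = false <;> simp [v, h, hw0])
      (fun n => by filter_upwards [hwsum n] with ω hω; rwa [← sum_filter])
      hεprodint (fun n i hi => hvar n i (mem_range.mp hi))
      (fun n i hi k hk => huncorr n i (mem_range.mp hi) k (mem_range.mp hk))
      (hw2.congr_left fun n => Eventually.of_forall fun ω => by simp [v, sum_filter])
  have hB := TendstoInMeasure.finset_sum univ fun j _ => (hcbar j).const_smul (β j)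
  refine (hM.add hB).congr (fun n => ?_) (Eventually.of_forall fun ω => zero_add _)
  filter_upwards [hbal n] with ω hω
  simp only [smul_eq_mul, ← hω]
  exact (sum_filter_mul_eq_sum_ite_mul_add _ _ univ _ _ (fun j i => c j (X i ω)) β).symm

/-- consistency (convergence in probability) of the balanced weighting
estimator under a correctly specified linear outcome model.  For each `n`, `𝒢 n` is the
σ-algebra generated by `(X 0, …, X (n-1), T 0, …, T (n-1))`, the `𝒢 n`-measurable
nonnegative weights `w n` sum to one and satisfy the exact balancing constraints,
the control residuals `ε i = Y i - ∑ j, β j * c j (X i)` have `𝒢 n`-conditional mean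
zero, conditional second moments bounded by `σ2`, and are conditionally uncorrelated,
`∑ (w n i)^2 → 0` in probability, and the treated moment average converges in
probability to `μ1`.  Then `∑_{T i = 0} w n i * Y i → β ⬝ μ1` in probability. -/
theorem stmt_3 {Ω 𝓧 : Type*} [m0 : MeasurableSpace Ω] [MeasurableSpace 𝓧]
    (μ : Measure Ω) [IsProbabilityMeasure μ]
    {p : ℕ} (X : ℕ → Ω → 𝓧) (T : ℕ → Ω → Bool) (Y : ℕ → Ω → ℝ)
    (c : Fin p → 𝓧 → ℝ) (β : Fin p → ℝ) (σ2 : ℝ)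
    (𝒢 : ℕ → MeasurableSpace Ω)
    (h𝒢 : ∀ n, 𝒢 n = (⨆ i ∈ Finset.range n, MeasurableSpace.comap (X i) inferInstance)
              ⊔ (⨆ i ∈ Finset.range n, MeasurableSpace.comap (T i) inferInstance))
    (hle : ∀ n, 𝒢 n ≤ m0)
    (hcmeas : ∀ j, Measurable (c j))
    (w : ℕ → ℕ → Ω → ℝ)
    (hwmeas : ∀ n i, Measurable[𝒢 n] (w n i))
    (hw0 : ∀ n i ω, 0 ≤ w n i ω)
    (hwsum : ∀ n, ∀ᵐ ω ∂μ,
      ∑ i ∈ (Finset.range n).filter (fun i => T i ω = false), w n i ω = 1)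
    (hbal : ∀ n, ∀ᵐ ω ∂μ, ∀ j,
      ∑ i ∈ (Finset.range n).filter (fun i => T i ω = false), w n i ω * c j (X i ω)
        = ((((Finset.range n).filter (fun i => T i ω = true)).card : ℝ))⁻¹ *
            ∑ i ∈ (Finset.range n).filter (fun i => T i ω = true), c j (X i ω))
    -- integrability of the control residuals and their products
    (hεint : ∀ i, Integrable
      (fun ω => if T i ω = false then Y i ω - ∑ j, β j * c j (X i ω) else 0) μ)
    (hε2int : ∀ i, Integrable
      (fun ω => (if T i ω = false then Y i ω - ∑ j, β j * c j (X i ω) else 0) ^ 2) μ)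
    (hεprodint : ∀ i k, Integrable
      (fun ω => (if T i ω = false then Y i ω - ∑ j, β j * c j (X i ω) else 0) *
        (if T k ω = false then Y k ω - ∑ j, β j * c j (X k ω) else 0)) μ)
    -- (i) conditional mean zero, bounded conditional variance, conditionally uncorrelated
    (hmean : ∀ n, ∀ i < n,
      μ[fun ω => if T i ω = false then Y i ω - ∑ j, β j * c j (X i ω) else 0 | 𝒢 n]
        =ᵐ[μ] 0)
    (hvar : ∀ n, ∀ i < n, ∀ᵐ ω ∂μ,
      (μ[fun ω' => (if T i ω' = false then Y i ω' - ∑ j, β j * c j (X i ω') else 0) ^ 2 | 𝒢 n]) ω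
        ≤ σ2)
    (huncorr : ∀ n, ∀ i < n, ∀ k < n, i ≠ k →
      μ[fun ω => (if T i ω = false then Y i ω - ∑ j, β j * c j (X i ω) else 0) *
          (if T k ω = false then Y k ω - ∑ j, β j * c j (X k ω) else 0) | 𝒢 n]
        =ᵐ[μ] 0)
    -- (ii) sum of squared weights tends to zero in probability
    (hw2 : TendstoInMeasure μ
      (fun n ω => ∑ i ∈ (Finset.range n).filter (fun i => T i ω = false), (w n i ω) ^ 2)
      atTop (fun _ => 0))
    -- (iii) the treated moment average converges in probability to μ1
    (μ1 : Fin p → ℝ)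
    (hcbar : ∀ j, TendstoInMeasure μ
      (fun n ω => ((((Finset.range n).filter (fun i => T i ω = true)).card : ℝ))⁻¹ *
        ∑ i ∈ (Finset.range n).filter (fun i => T i ω = true), c j (X i ω))
      atTop (fun _ => μ1 j)) :
    TendstoInMeasure μ
      (fun n ω => ∑ i ∈ (Finset.range n).filter (fun i => T i ω = false), w n i ω * Y i ω)
      atTop (fun _ => ∑ j, β j * μ1 j) :=
  stmt_3_general (m0 := m0) μ X T Y c β σ2 𝒢 h𝒢 hle w hwmeas hw0 hwsum hbal hεprodint hvar huncorr
    hw2 μ1 hcbar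
end

section
/- Let $(\Omega, \mathcal{F}, P)$ be a probability space, $X$ a random element, and $T \in \{0,1\}$ a random variable with $0 < P(T=1) < 1$. Let $e(X)$ be a version of the conditional probability $P(T = 1 \mid \sigma(X))$ and suppose $0 < e(X) < 1$ almost surely. Then for every measurable function $f$ with $f(X)$ integrable and $\frac{e(X)}{1 - e(X)} f(X)$ integrable on $\{T = 0\}$, the change-of-measure identity holds: $\mathbb{E}[f(X) \mid T = 1] = \frac{P(T=0)}{P(T=1)} \cdot \mathbb{E}\left[\frac{e(X)}{1 - e(X)} f(X) \,\middle|\, T = 0\right]$, where $\mathbb{E}[\cdot \mid T = t]$ denotes expectation under $P$ conditioned on the event $\{T = t\}$. -/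
/-!
Write `s₁ = {T = 1}`, `s₀ = {T = 0}` and `e = P(T = 1 ∣ σ(X))`. For a `σ(X)`-measurable `h`,
the tower property and pulling `h` out of the conditional expectation give
`∫_{s₁} h = E[h e]` and `∫_{s₀} h = E[h (1 - e)]`. Taking `h = f(X)` in the first and
`h = e/(1-e) f(X)` in the second, overlap makes the two right-hand sides agree, so
`∫_{s₁} f(X) = ∫_{s₀} e/(1-e) f(X)`; dividing by `P(T = 1)` and rewriting the right-hand
side through the conditional measure on `s₀` gives the identity.
-/

open MeasureTheory ProbabilityTheory

section CondMeasure

variable {Ω : Type*} [MeasurableSpace Ω] {μ : Measure Ω} {s : Set Ω}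

theorem integral_cond_eq_inv_mul_setIntegral (φ : Ω → ℝ) :
    ∫ ω, φ ω ∂μ[|s] = (μ s).toReal⁻¹ * ∫ ω in s, φ ω ∂μ := by
  rw [ProbabilityTheory.cond, integral_smul_measure, ENNReal.toReal_inv, smul_eq_mul]

theorem IntegrableOn.of_integrable_cond {φ : Ω → ℝ} (hs : μ s ≠ ⊤)
    (hφ : Integrable φ μ[|s]) : IntegrableOn φ s μ := by
  by_cases hs₀ : μ s = 0
  · simp [IntegrableOn, Measure.restrict_eq_zero.mpr hs₀]
  · exact (integrable_smul_measure (ENNReal.inv_ne_zero.mpr hs)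
      (ENNReal.inv_ne_top.mpr hs₀)).mp hφ

theorem integral_cond_eq_div_mul_integral_cond {t : Set Ω} {φ ψ : Ω → ℝ} (ht : μ t ≠ ⊤)
    (hst : ∫ ω in s, φ ω ∂μ = ∫ ω in t, ψ ω ∂μ) :
    ∫ ω, φ ω ∂μ[|s] = (μ t).toReal / (μ s).toReal * ∫ ω, ψ ω ∂μ[|t] := by
  rw [integral_cond_eq_inv_mul_setIntegral, integral_cond_eq_inv_mul_setIntegral, hst]
  rcases eq_or_ne (μ t) 0 with ht₀ | ht₀
  · simp [setIntegral_measure_zero _ ht₀]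
  · have ht₀' : (μ t).toReal ≠ 0 := ENNReal.toReal_ne_zero.mpr ⟨ht₀, ht⟩
    rw [← mul_assoc, div_mul_eq_mul_div, mul_inv_cancel₀ ht₀', one_div]

end CondMeasure

section CondExpIndicator

variable {Ω : Type*} {m m₀ : MeasurableSpace Ω} {μ : Measure Ω} [IsFiniteMeasure μ]
  {s : Set Ω}

theorem setIntegral_eq_integral_mul_condExp_indicator (hm : m ≤ m₀) (hs : MeasurableSet[m₀] s)
    {h : Ω → ℝ} (hh : AEStronglyMeasurable[m] h μ) (hhs : IntegrableOn h s μ) :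
    ∫ ω in s, h ω ∂μ = ∫ ω, h ω * μ[s.indicator (1 : Ω → ℝ) | m] ω ∂μ := by
  have hmul : h * s.indicator 1 = s.indicator h := by
    ext ω; by_cases hω : ω ∈ s <;> simp [hω]
  have hind : Integrable (s.indicator (1 : Ω → ℝ)) μ := (integrable_const 1).indicator hs
  have hpull : μ[h * s.indicator 1 | m] =ᵐ[μ] h * μ[s.indicator 1 | m] :=
    condExp_mul_of_aestronglyMeasurable_left hh
      (hmul ▸ (integrable_indicator_iff hs).mpr hhs) hind
  calc ∫ ω in s, h ω ∂μ = ∫ ω, (h * s.indicator (1 : Ω → ℝ)) ω ∂μ := by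
        rw [hmul, integral_indicator hs]
    _ = ∫ ω, μ[h * s.indicator 1 | m] ω ∂μ := (integral_condExp hm).symm
    _ = ∫ ω, h ω * μ[s.indicator (1 : Ω → ℝ) | m] ω ∂μ := integral_congr_ae hpull

theorem condExp_indicator_compl_one (hm : m ≤ m₀) (hs : MeasurableSet[m₀] s) :
    μ[sᶜ.indicator (1 : Ω → ℝ) | m] =ᵐ[μ] 1 - μ[s.indicator (1 : Ω → ℝ) | m] := by
  have hcompl : sᶜ.indicator (1 : Ω → ℝ) = 1 - s.indicator 1 := by
    ext ω; by_cases hω : ω ∈ s <;> simp [hω]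
  have hone : Integrable (1 : Ω → ℝ) μ := integrable_const 1
  have hconst : μ[(1 : Ω → ℝ) | m] = 1 := condExp_const hm 1
  rw [hcompl]
  simpa only [hconst] using condExp_sub hone (hone.indicator hs) m

theorem setIntegral_eq_setIntegral_compl_odds_mul (hm : m ≤ m₀) (hs : MeasurableSet[m₀] s)
    {e h : Ω → ℝ} (he : e =ᵐ[μ] μ[s.indicator (1 : Ω → ℝ) | m])
    (he_ne : ∀ᵐ ω ∂μ, e ω ≠ 1)
    (hh : AEStronglyMeasurable[m] h μ) (hhs : IntegrableOn h s μ)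
    (hhsc : IntegrableOn (fun ω => e ω / (1 - e ω) * h ω) sᶜ μ) :
    ∫ ω in s, h ω ∂μ = ∫ ω in sᶜ, e ω / (1 - e ω) * h ω ∂μ := by
  have he_meas : AEStronglyMeasurable[m] e μ := ⟨_, stronglyMeasurable_condExp, he⟩
  have hodds_meas : AEStronglyMeasurable[m] (fun ω => e ω / (1 - e ω) * h ω) μ :=
    (he_meas.div₀ (aestronglyMeasurable_const.sub he_meas)).mul hh
  rw [setIntegral_eq_integral_mul_condExp_indicator hm hs hh hhs,
    setIntegral_eq_integral_mul_condExp_indicator hm hs.compl hodds_meas hhsc]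
  refine integral_congr_ae ?_
  filter_upwards [he, condExp_indicator_compl_one (μ := μ) hm hs, he_ne]
    with ω he_ω hsc_ω hne_ω
  have h1e : 1 - e ω ≠ 0 := sub_ne_zero.mpr hne_ω.symm
  rw [hsc_ω, Pi.sub_apply, ← he_ω, Pi.one_apply]
  field_simp

end CondExpIndicator

theorem stmt_8_general {Ω 𝓧 : Type*} [m0 : MeasurableSpace Ω] [MeasurableSpace 𝓧]
    (μ : Measure Ω) [IsProbabilityMeasure μ]
    (X : Ω → 𝓧) (hX : Measurable X) (T : Ω → Bool) (hT : Measurable T)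
    (eX : Ω → ℝ)
    (heX : eX =ᵐ[μ]
      μ[fun ω => if T ω then (1 : ℝ) else 0 | MeasurableSpace.comap X inferInstance])
    (hover : ∀ᵐ ω ∂μ, 0 < eX ω ∧ eX ω < 1)
    (f : 𝓧 → ℝ) (hf : Measurable f)
    (hfint : Integrable (fun ω => f (X ω)) μ)
    (hwint : Integrable (fun ω => eX ω / (1 - eX ω) * f (X ω)) (μ[|{ω | T ω = false}])) :
    ∫ ω, f (X ω) ∂(μ[|{ω | T ω = true}])
      = ((μ {ω | T ω = false}).toReal / (μ {ω | T ω = true}).toReal) *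
        ∫ ω, eX ω / (1 - eX ω) * f (X ω) ∂(μ[|{ω | T ω = false}]) := by
  have hs₁ : MeasurableSet {ω | T ω = true} := hT (measurableSet_singleton true)
  have hs₀ : {ω | T ω = false} = {ω | T ω = true}ᶜ := by ext ω; simp
  have htreat : (fun ω => if T ω then (1 : ℝ) else 0) = {ω | T ω = true}.indicator 1 := by
    ext ω; by_cases hω : T ω <;> simp [hω]
  rw [htreat] at heX
  refine integral_cond_eq_div_mul_integral_cond (measure_ne_top μ _) ?_
  rw [hs₀] at hwint ⊢
  exact setIntegral_eq_setIntegral_compl_odds_mul hX.comap_le hs₁ heX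
    (hover.mono fun ω hω => hω.2.ne) (hf.comp (comap_measurable X)).aestronglyMeasurable
    hfint.integrableOn (IntegrableOn.of_integrable_cond (measure_ne_top μ _) hwint)

/-- the inverse-probability-weighting change-of-measure identity.
`eX` is a version of the conditional probability `P(T = 1 ∣ σ(X))` with
`0 < eX < 1` a.s. (overlap), and `0 < P(T=1) < 1`.  Then for every measurable `f`
with `f(X)` integrable and `(eX/(1-eX)) f(X)` integrable under the conditional
measure given `{T = 0}`,
`E[f(X) ∣ T=1] = (P(T=0)/P(T=1)) ⬝ E[(eX/(1-eX)) f(X) ∣ T=0]`. -/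
theorem stmt_8 {Ω 𝓧 : Type*} [m0 : MeasurableSpace Ω] [MeasurableSpace 𝓧]
    (μ : Measure Ω) [IsProbabilityMeasure μ]
    (X : Ω → 𝓧) (hX : Measurable X) (T : Ω → Bool) (hT : Measurable T)
    (hT1 : 0 < (μ {ω | T ω = true}).toReal)
    (hT1' : (μ {ω | T ω = true}).toReal < 1)
    (eX : Ω → ℝ)
    (heX : eX =ᵐ[μ]
      μ[fun ω => if T ω then (1 : ℝ) else 0 | MeasurableSpace.comap X inferInstance])
    (hover : ∀ᵐ ω ∂μ, 0 < eX ω ∧ eX ω < 1)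
    (f : 𝓧 → ℝ) (hf : Measurable f)
    (hfint : Integrable (fun ω => f (X ω)) μ)
    (hwint : Integrable (fun ω => eX ω / (1 - eX ω) * f (X ω)) (μ[|{ω | T ω = false}])) :
    ∫ ω, f (X ω) ∂(μ[|{ω | T ω = true}])
      = ((μ {ω | T ω = false}).toReal / (μ {ω | T ω = true}).toReal) *
        ∫ ω, eX ω / (1 - eX ω) * f (X ω) ∂(μ[|{ω | T ω = false}]) :=
  stmt_8_general (m0 := m0) μ X hX T hT eX heX hover f hf hfint hwint
end

section
/- Let $(\Omega, \mathcal{F}, P)$ be a probability space with random covariate moments $c(X) \in \mathbb{R}^p$ (integrable) and treatment indicator $T \in \{0,1\}$ with $0 < P(T=1) < 1$. Suppose the propensity score follows the logistic-linear model: $P(T=1 \mid \sigma(X)) = \frac{\exp(\theta^* \cdot c(X))}{1 + \exp(\theta^* \cdot c(X))}$ almost surely for some $\theta^* \in \mathbb{R}^p$, and let $m^* = \mathbb{E}[c(X) \mid T=1]$. Then the population Entropy Balancing estimating equation is satisfied exactly at $(\theta^*, m^*)$: $\mathbb{E}\left[(1-T)\, e^{\theta^* \cdot c(X)}\, (c_j(X)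 - m^*_j)\right] = 0$ for every $j = 1,\dots,p$. -/
/-!
Write `s = exp(θ* ⬝ c(X))` and `π = s / (1 + s)` for the propensity score. Conditioning on `X`
replaces `1 - T` by `1 - π`, and `(1 - π) s = π` is the logistic form of `π`.
Hence `E[(1 - T) s h(X)] = E[π h(X)] = E[T h(X)]` for every `h`, and for `h = cⱼ - m*ⱼ` the right
side vanishes by the definition of `m*` as the mean of `cⱼ(X)` on `{T = 1}`.
-/

open MeasureTheory ProbabilityTheory Finset

section

variable {Ω : Type*} {m m0 : MeasurableSpace Ω} {μ : Measure Ω}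

theorem integral_mul_condExp_of_stronglyMeasurable (hm : m ≤ m0) [SigmaFinite (μ.trim hm)]
    {f g : Ω → ℝ} (hf : StronglyMeasurable[m] f) (hfg : Integrable (f * g) μ)
    (hg : Integrable g μ) :
    ∫ ω, f ω * μ[g|m] ω ∂μ = ∫ ω, f ω * g ω ∂μ := by
  calc ∫ ω, f ω * μ[g|m] ω ∂μ = ∫ ω, μ[f * g|m] ω ∂μ :=
        integral_congr_ae (condExp_mul_of_stronglyMeasurable_left hf hfg hg).symm
    _ = ∫ ω, f ω * g ω ∂μ := integral_condExp hm

theorem integral_one_sub_mul_mul_eq_integral_mul_of_condExp_eq_logistic (hm : m ≤ m0)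
    [IsFiniteMeasure μ] {I e h : Ω → ℝ} (hI : Integrable I μ)
    (he : Measurable[m] e) (he_nonneg : ∀ ω, 0 ≤ e ω) (hh : Measurable[m] h)
    (hcond : μ[I|m] =ᵐ[μ] fun ω => e ω / (1 + e ω))
    (hint : Integrable (fun ω => (1 - I ω) * e ω * h ω) μ) (hhI : Integrable (h * I) μ) :
    ∫ ω, (1 - I ω) * e ω * h ω ∂μ = ∫ ω, h ω * I ω ∂μ := by
  have hcond_compl : μ[1 - I|m] =ᵐ[μ] fun ω => 1 / (1 + e ω) := by
    filter_upwards [condExp_sub (integrable_const (1 : ℝ)) hI m, hcond] with ω hsub hω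
    have : 1 + e ω ≠ 0 := by linarith [he_nonneg ω]
    rw [show (1 : Ω → ℝ) = fun _ => 1 from rfl, hsub, Pi.sub_apply, condExp_const hm, hω]
    field_simp
    ring
  have hehI : Integrable ((e * h) * (1 - I)) μ :=
    hint.congr (.of_forall fun ω => by simp only [Pi.mul_apply, Pi.sub_apply, Pi.one_apply]; ring)
  calc ∫ ω, (1 - I ω) * e ω * h ω ∂μ
      = ∫ ω, (e * h) ω * (1 - I) ω ∂μ := by
        congr 1 with ω; simp only [Pi.mul_apply, Pi.sub_apply, Pi.one_apply]; ring
    _ = ∫ ω, (e * h) ω * μ[1 - I|m] ω ∂μ :=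
        (integral_mul_condExp_of_stronglyMeasurable hm (he.mul hh).stronglyMeasurable hehI
          ((integrable_const 1).sub hI)).symm
    _ = ∫ ω, h ω * μ[I|m] ω ∂μ := by
        refine integral_congr_ae ?_
        filter_upwards [hcond_compl, hcond] with ω h1 h2
        rw [Pi.mul_apply, h1, h2]
        ring
    _ = ∫ ω, h ω * I ω ∂μ :=
        integral_mul_condExp_of_stronglyMeasurable hm hh.stronglyMeasurable hhI hI

theorem setIntegral_sub_integral_cond_eq_zero [IsFiniteMeasure μ] {s : Set Ω} {f : Ω → ℝ}
    (hf : IntegrableOn f s μ) :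
    ∫ ω in s, (f ω - ∫ ω', f ω' ∂μ[|s]) ∂μ = 0 := by
  rw [integral_sub hf (integrable_const _), integral_const, measureReal_restrict_apply_univ,
    smul_eq_mul, ProbabilityTheory.cond, integral_smul_measure, smul_eq_mul, ENNReal.toReal_inv,
    ← measureReal_def]
  by_cases hs : μ.real s = 0
  · have hrestrict : μ.restrict s = 0 := Measure.restrict_eq_zero.2 ((measureReal_eq_zero_iff).1 hs)
    simp [hs, hrestrict]
  · field_simp
    ring

end

theorem stmt_9_general {Ω 𝓧 : Type*} [m0 : MeasurableSpace Ω] [MeasurableSpace 𝓧]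
    (μ : Measure Ω) [IsProbabilityMeasure μ]
    (X : Ω → 𝓧) (hX : Measurable X) (T : Ω → Bool) (hT : Measurable T)
    {p : ℕ} (c : Fin p → 𝓧 → ℝ) (hc : ∀ j, Measurable (c j))
    (hcint : ∀ j, Integrable (fun ω => c j (X ω)) μ)
    (θ : Fin p → ℝ)
    (hmodel : μ[fun ω => if T ω then (1 : ℝ) else 0 |
        MeasurableSpace.comap X inferInstance]
      =ᵐ[μ] fun ω => Real.exp (∑ j, θ j * c j (X ω)) /
        (1 + Real.exp (∑ j, θ j * c j (X ω))))
    (mstar : Fin p → ℝ)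
    (hmstar : ∀ j, mstar j = ∫ ω, c j (X ω) ∂(μ[|{ω | T ω = true}])) :
    ∀ j, ∫ ω, (if T ω then (0 : ℝ) else 1) * Real.exp (∑ k, θ k * c k (X ω)) *
        (c j (X ω) - mstar j) ∂μ = 0 := by
  intro j
  set I : Ω → ℝ := fun ω => if T ω then 1 else 0
  set A := {ω | T ω = true}
  have hA : MeasurableSet A := hT (measurableSet_singleton true)
  have hIA : ∀ ω, I ω = A.indicator 1 ω := fun ω => by by_cases hω : T ω <;> simp [I, A, hω]
  have hcompl : ∀ ω, (if T ω then (0 : ℝ) else 1) = 1 - I ω := fun ω => by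
    by_cases hω : T ω <;> simp [I, hω]
  simp_rw [hcompl]
  by_cases hint : Integrable (fun ω => (1 - I ω) *
      Real.exp (∑ k, θ k * c k (X ω)) * (c j (X ω) - mstar j)) μ
  swap
  · exact integral_undef hint
  have hcX : ∀ k, Measurable[MeasurableSpace.comap X inferInstance] (fun ω => c k (X ω)) :=
    fun k => (hc k).comp (comap_measurable X)
  have hh_treated :
      (fun ω => (c j (X ω) - mstar j) * I ω) = A.indicator fun ω => c j (X ω) - mstar j := by
    ext ω; simp [hIA, Set.indicator_apply]
  rw [integral_one_sub_mul_mul_eq_integral_mul_of_condExp_eq_logistic hX.comap_le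
      ((integrable_const 1).indicator hA |>.congr (.of_forall fun ω => (hIA ω).symm))
      (Finset.measurable_sum _ fun k _ => (hcX k).const_mul _).exp (fun _ => (Real.exp_pos _).le)
      ((hcX j).sub_const _) hmodel hint
      ((((hcint j).sub (integrable_const _)).indicator hA).congr
        (.of_forall fun ω => (congrFun hh_treated ω).symm))]
  rw [hh_treated, integral_indicator hA, hmstar j]
  exact setIntegral_sub_integral_cond_eq_zero (hcint j).integrableOn

/-- if the propensity score follows the logistic-linear model
`P(T=1 ∣ σ(X)) = exp(θ*⬝c(X))/(1 + exp(θ*⬝c(X)))` a.s. and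
`m* = E[c(X) ∣ T=1]`, then the population Entropy Balancing estimating equation
`E[(1-T) exp(θ*⬝c(X)) (cⱼ(X) - m*ⱼ)] = 0` holds for every `j`. -/
theorem stmt_9 {Ω 𝓧 : Type*} [m0 : MeasurableSpace Ω] [MeasurableSpace 𝓧]
    (μ : Measure Ω) [IsProbabilityMeasure μ]
    (X : Ω → 𝓧) (hX : Measurable X) (T : Ω → Bool) (hT : Measurable T)
    (hT1 : μ {ω | T ω = true} ≠ 0) (hT0 : μ {ω | T ω = false} ≠ 0)
    {p : ℕ} (c : Fin p → 𝓧 → ℝ) (hc : ∀ j, Measurable (c j))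
    (hcint : ∀ j, Integrable (fun ω => c j (X ω)) μ)
    (θ : Fin p → ℝ)
    (hmodel : μ[fun ω => if T ω then (1 : ℝ) else 0 |
        MeasurableSpace.comap X inferInstance]
      =ᵐ[μ] fun ω => Real.exp (∑ j, θ j * c j (X ω)) /
        (1 + Real.exp (∑ j, θ j * c j (X ω))))
    (mstar : Fin p → ℝ)
    (hmstar : ∀ j, mstar j = ∫ ω, c j (X ω) ∂(μ[|{ω | T ω = true}])) :
    ∀ j, ∫ ω, (if T ω then (0 : ℝ) else 1) * Real.exp (∑ k, θ k * c k (X ω)) *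
        (c j (X ω) - mstar j) ∂μ = 0 :=
  stmt_9_general (m0 := m0) μ X hX T hT c hc hcint θ hmodel mstar hmstar
end

section
/- Let $c^* \in \mathbb{R}^p$ and $\epsilon > 0. For each $b \in \{-1, 0, 1\}^p$, let $R_b = \{x \in \mathbb{R}^p : \|x - (c^* + \tfrac{3}{2}\epsilon\, b)\|_\infty \le \tfrac{\epsilon}{2}\}$ be the box of sup-norm radius $\epsilon/2$ centered at $c^* + \tfrac{3}{2}\epsilon\, b$. Then: (i) the $3^p$ boxes $R_b$ are pairwise disjoint; and (ii) for any choice of points $x_b \in R_b$, one for each $b \in \{-1,0,1\}^p$, the convex hull of $\{x_b : b \in \{-1,0,1\}^p\}$ contains the box $B_\epsilon(c^*) = \{x \in \mathbb{R}^p : \|x - c^*\|_\infty \le \epsilon\}$. -/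
/-!
Distinct sign patterns differ by at least `1` in some coordinate, so the centres of two boxes
are `3ε/2` apart there while the boxes have radius `ε/2`.

If `y` with `‖y - c*‖_∞ ≤ ε` were outside the (closed) convex hull, a linear functional
`f = ∑ v_j z_j` would separate it strictly from every `x_b`. For `b = sign v`, each coordinate
of `x_b - c*` lies on the side of `v_j` at distance at least `ε`, so
`f (x_b - c*) ≥ ε ‖v‖₁ ≥ f (y - c*)`, a contradiction.
-/

theorem mem_convexHull_of_forall_exists_le {E : Type*} [TopologicalSpace E] [AddCommGroup E]
    [Module ℝ E] [IsTopologicalAddGroup E] [ContinuousSMul ℝ E] [LocallyConvexSpace ℝ E]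
    {s : Set E} (hs : IsClosed (convexHull ℝ s)) {y : E}
    (h : ∀ f : StrongDual ℝ E, ∃ x ∈ s, f y ≤ f x) : y ∈ convexHull ℝ s := by
  by_contra hy
  obtain ⟨f, u, hfs, hfy⟩ := geometric_hahn_banach_closed_point (convex_convexHull ℝ s) hs hy
  obtain ⟨x, hx, hyx⟩ := h f
  linarith [hfs x (subset_convexHull ℝ s hx)]

theorem finite_setOf_forall_eq_neg_one_or_eq_zero_or_eq_one {ι : Type*} [Finite ι] :
    {b : ι → ℝ | ∀ j, b j = -1 ∨ b j = 0 ∨ b j = 1}.Finite := by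
  convert Set.Finite.pi (t := fun _ : ι => ({-1, 0, 1} : Set ℝ)) fun _ => by simp
  ext b
  simp

theorem one_le_abs_sub_of_ne {s t : ℝ} (hs : s = -1 ∨ s = 0 ∨ s = 1)
    (ht : t = -1 ∨ t = 0 ∨ t = 1) (hst : s ≠ t) : 1 ≤ |s - t| := by
  rcases hs with rfl | rfl | rfl <;> rcases ht with rfl | rfl | rfl <;>
    first | exact absurd rfl hst | norm_num

theorem disjoint_setOf_abs_sub_le_of_ne {ι : Type*} {c b b' : ι → ℝ} {ε : ℝ} (hε : 0 < ε)
    (hb : ∀ j, b j = -1 ∨ b j = 0 ∨ b j = 1) (hb' : ∀ j, b' j = -1 ∨ b' j = 0 ∨ b' j = 1)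
    (hbb' : b ≠ b') :
    Disjoint {x : ι → ℝ | ∀ j, |x j - (c j + 3 / 2 * ε * b j)| ≤ ε / 2}
      {x : ι → ℝ | ∀ j, |x j - (c j + 3 / 2 * ε * b' j)| ≤ ε / 2} := by
  refine Set.disjoint_left.2 fun z hz hz' => ?_
  obtain ⟨j, hj⟩ := Function.ne_iff.mp hbb'
  have hgap : 3 / 2 * ε * |b j - b' j| ≤ ε :=
    calc 3 / 2 * ε * |b j - b' j| = |3 / 2 * ε * (b j - b' j)| := by
          rw [abs_mul, abs_of_pos (by positivity : (0 : ℝ) < 3 / 2 * ε)]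
      _ = |(z j - (c j + 3 / 2 * ε * b' j)) - (z j - (c j + 3 / 2 * ε * b j))| := by ring_nf
      _ ≤ ε / 2 + ε / 2 := (abs_sub _ _).trans (add_le_add (hz' j) (hz j))
      _ = ε := by ring
  nlinarith [one_le_abs_sub_of_ne (hb j) (hb' j) hj]

theorem mul_abs_le_sub_mul_of_abs_sub_le {c x v ε : ℝ}
    (hx : |x - (c + 3 / 2 * ε * Real.sign v)| ≤ ε / 2) : ε * |v| ≤ (x - c) * v := by
  rw [abs_le] at hx
  rcases lt_trichotomy v 0 with hv | rfl | hv
  · rw [Real.sign_of_neg hv, abs_of_neg hv] at *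
    nlinarith
  · simp
  · rw [Real.sign_of_pos hv, abs_of_pos hv] at *
    nlinarith

theorem sum_sub_mul_le_sum_sub_mul_of_abs_sub_le {ι : Type*} [Fintype ι] {c x y v : ι → ℝ}
    {ε : ℝ} (hy : ∀ j, |y j - c j| ≤ ε)
    (hx : ∀ j, |x j - (c j + 3 / 2 * ε * Real.sign (v j))| ≤ ε / 2) :
    ∑ j, (y j - c j) * v j ≤ ∑ j, (x j - c j) * v j := by
  refine Finset.sum_le_sum fun j _ => ?_
  calc (y j - c j) * v j ≤ |y j - c j| * |v j| := by rw [← abs_mul]; exact le_abs_self _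
    _ ≤ ε * |v j| := by gcongr; exact hy j
    _ ≤ (x j - c j) * v j := mul_abs_le_sub_mul_of_abs_sub_le (hx j)

/-- geometric lemma for the grid of `3^p` boxes.  For `b ∈ {-1,0,1}^p`,
let `R b` be the sup-norm box of radius `ε/2` centered at `c* + (3/2)ε b`.  Then
(i) the boxes `R b` are pairwise disjoint, and (ii) for any selection of one point
`x b ∈ R b` for each `b`, the convex hull of the selected points contains the sup-norm
box of radius `ε` centered at `c*`. -/
theorem stmt_13 {p : ℕ} (cstar : Fin p → ℝ) (ε : ℝ) (hε : 0 < ε) :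
    (∀ b b' : Fin p → ℝ,
      (∀ j, b j = -1 ∨ b j = 0 ∨ b j = 1) → (∀ j, b' j = -1 ∨ b' j = 0 ∨ b' j = 1) →
      b ≠ b' →
      Disjoint {x : Fin p → ℝ | ∀ j, |x j - (cstar j + 3 / 2 * ε * b j)| ≤ ε / 2}
               {x : Fin p → ℝ | ∀ j, |x j - (cstar j + 3 / 2 * ε * b' j)| ≤ ε / 2})
    ∧ (∀ x : (Fin p → ℝ) → (Fin p → ℝ),
        (∀ b, (∀ j, b j = -1 ∨ b j = 0 ∨ b j = 1) →
          ∀ j, |x b j - (cstar j + 3 / 2 * ε * b j)| ≤ ε / 2) →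
        {y : Fin p → ℝ | ∀ j, |y j - cstar j| ≤ ε} ⊆
          convexHull ℝ (x '' {b | ∀ j, b j = -1 ∨ b j = 0 ∨ b j = 1})) := by
  refine ⟨fun b b' hb hb' => disjoint_setOf_abs_sub_le_of_ne hε hb hb', fun x hx y hy => ?_⟩
  refine mem_convexHull_of_forall_exists_le
    ((finite_setOf_forall_eq_neg_one_or_eq_zero_or_eq_one.image x).isClosed_convexHull (𝕜 := ℝ))
    fun f => ?_
  set v : Fin p → ℝ := fun j => f (Pi.single j 1)
  have hf (z : Fin p → ℝ) : f z = ∑ j, z j * v j := by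
    rw [← f.coe_coe, LinearMap.pi_apply_eq_sum_univ]
    refine Finset.sum_congr rfl fun j _ => ?_
    simp only [v, smul_eq_mul, ContinuousLinearMap.coe_coe]
    congr 2
    ext k
    simp [Pi.single_apply, eq_comm]
  have hsign (j : Fin p) : Real.sign (v j) = -1 ∨ Real.sign (v j) = 0 ∨ Real.sign (v j) = 1 :=
    Real.sign_apply_eq _
  refine ⟨x fun j => Real.sign (v j), ⟨_, hsign, rfl⟩, ?_⟩
  rw [← sub_le_sub_iff_right (f cstar), ← map_sub, ← map_sub, hf, hf]
  exact sum_sub_mul_le_sum_sub_mul_of_abs_sub_le hy (hx _ hsign)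
end

section
/- Let $V_1, V_2, \dots$ be independent identically distributed random vectors in $\mathbb{R}^p$ with law $\mu$, let $c^* \in \mathbb{R}^p$ and $\epsilon > 0$, and suppose $\rho := \min_{b \in \{-1,0,1\}^p} \mu(R_b) > 0$, where $R_b$ is the box of sup-norm radius $\epsilon/2$ centered at $c^* + \tfrac{3}{2}\epsilon\, b$. Then $P\left(\mathrm{conv}\{V_1,\dots,V_n\} \supseteq B_\epsilon(c^*)\right) \ge 1 - 3^p (1-\rho)^n \to 1$ as $n \to \infty$, where $B_\epsilon(c^*) = \{x : \|x - c^*\|_\infty \le \epsilon\}$ and $\mathrm{conv}$ denotes the convex hull. -/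
/-!
If a point `x` of the box `B_ε(c*)` were outside the convex hull of the sample, a separating
linear functional `f y = ∑ j, w j * y j` would satisfy `f x < f y` for every sample point `y`.
But on the box `R_b` with `b = -sign w` the functional is at most its minimum over `B_ε(c*)`,
so no sample point lies in `R_b`. Hence containment can only fail if some `R_b` is missed by all `n`
samples; by independence this has probability at most `(1 - ρ)^n` for each of the `3^p` sign
vectors `b`, and a union bound finishes.
-/

open MeasureTheory ProbabilityTheory Filter

noncomputable def signVectors (p : ℕ) : Finset (Fin p → ℝ) :=
  Fintype.piFinset fun _ => {-1, 0, 1}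

theorem mem_signVectors {p : ℕ} {b : Fin p → ℝ} :
    b ∈ signVectors p ↔ ∀ j, b j = -1 ∨ b j = 0 ∨ b j = 1 := by
  simp [signVectors]

theorem card_signVectors (p : ℕ) : (signVectors p).card = 3 ^ p := by
  rw [signVectors, Fintype.card_piFinset]
  norm_num

def signBox {p : ℕ} (c : Fin p → ℝ) (ε : ℝ) (b : Fin p → ℝ) : Set (Fin p → ℝ) :=
  {x | ∀ j, |x j - (c j + 3 / 2 * ε * b j)| ≤ ε / 2}

theorem measurableSet_signBox {p : ℕ} (c : Fin p → ℝ) (ε : ℝ) (b : Fin p → ℝ) :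
    MeasurableSet (signBox c ε b) := by
  simp only [signBox, Set.ofPred_forall]
  exact .iInter fun j =>
    measurableSet_le ((measurable_pi_apply j).sub measurable_const).abs measurable_const

theorem neg_sign_mem_signVectors {p : ℕ} (w : Fin p → ℝ) :
    (fun j => -(SignType.sign (w j) : ℝ)) ∈ signVectors p := by
  refine mem_signVectors.2 fun j => ?_
  rcases SignType.sign (w j) with _ | _ | _ <;> norm_num

theorem mul_le_mul_of_near_neg_sign {x y c w ε : ℝ} (hx : |x - c| ≤ ε)
    (hy : |y - (c + 3 / 2 * ε * -(SignType.sign w : ℝ))| ≤ ε / 2) : y * w ≤ x * w := by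
  have hyw : y * w = (y - (c + 3 / 2 * ε * -(SignType.sign w : ℝ))) * w + c * w
      - 3 / 2 * ε * |w| := by
    rw [← sign_mul_self w]
    ring
  -- the shift `(3/2) ε |w|` equals the slack `ε/2 |w|` of `y` plus the slack `ε |w|` of `x`
  have hy' : (y - (c + 3 / 2 * ε * -(SignType.sign w : ℝ))) * w ≤ ε / 2 * |w| :=
    (le_abs_self _).trans <| by rw [abs_mul]; exact mul_le_mul_of_nonneg_right hy (abs_nonneg w)
  have hx' : -(ε * |w|) ≤ (x - c) * w :=
    neg_le_of_abs_le <| by rw [abs_mul]; exact mul_le_mul_of_nonneg_right hx (abs_nonneg w)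
  linarith

theorem exists_signBox_le {p : ℕ} (f : (Fin p → ℝ) →ₗ[ℝ] ℝ) (c : Fin p → ℝ) (ε : ℝ) :
    ∃ b ∈ signVectors p, ∀ y ∈ signBox c ε b, ∀ x ∈ {x : Fin p → ℝ | ∀ j, |x j - c j| ≤ ε},
      f y ≤ f x := by
  classical
  set w : Fin p → ℝ := fun j => f fun i => if j = i then 1 else 0
  have hf : ∀ z, f z = ∑ j, z j * w j := fun z => by
    simpa only [smul_eq_mul] using f.pi_apply_eq_sum_univ z
  refine ⟨_, neg_sign_mem_signVectors w, fun y hy x hx => ?_⟩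
  rw [hf, hf]
  exact Finset.sum_le_sum fun j _ => mul_le_mul_of_near_neg_sign (hx j) (hy j)

theorem box_subset_convexHull {p : ℕ} (c : Fin p → ℝ) (ε : ℝ) {S : Set (Fin p → ℝ)}
    (hS : S.Finite) (hmeet : ∀ b ∈ signVectors p, (S ∩ signBox c ε b).Nonempty) :
    {x : Fin p → ℝ | ∀ j, |x j - c j| ≤ ε} ⊆ convexHull ℝ S := by
  intro x hx
  by_contra hxS
  obtain ⟨f, u, hfx, hfS⟩ := geometric_hahn_banach_point_closed (convex_convexHull ℝ S)
    (hS.isClosed_convexHull ℝ) hxS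
  obtain ⟨b, hb, hle⟩ := exists_signBox_le (f : (Fin p → ℝ) →ₗ[ℝ] ℝ) c ε
  obtain ⟨y, hyS, hyb⟩ := hmeet b hb
  exact (hfx.trans (hfS y (subset_convexHull ℝ S hyS))).not_ge (hle y hyb x hx)

theorem measureReal_biInter_preimage_compl_eq_pow {Ω E ι : Type*} [MeasurableSpace Ω]
    [MeasurableSpace E] {μ : Measure Ω} {ν : Measure E} [IsProbabilityMeasure ν]
    {V : ι → Ω → E} (hVm : ∀ k, Measurable (V k)) (hindep : iIndepFun V μ)
    (hident : ∀ k, μ.map (V k) = ν) {A : Set E} (hA : MeasurableSet A) (S : Finset ι) :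
    μ.real (⋂ k ∈ S, V k ⁻¹' Aᶜ) = (1 - ν.real A) ^ S.card := by
  have hk : ∀ k, μ (V k ⁻¹' Aᶜ) = ν Aᶜ := fun k => by
    rw [← hident k, Measure.map_apply (hVm k) hA.compl]
  rw [measureReal_def, hindep.measure_inter_preimage_eq_mul S fun _ _ => hA.compl,
    Finset.prod_congr rfl fun k _ => hk k, Finset.prod_const, ENNReal.toReal_pow,
    ← measureReal_def, probReal_compl_eq_one_sub hA]

theorem measureReal_biUnion_biInter_preimage_compl_le {Ω E ι β : Type*} [MeasurableSpace Ω]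
    [MeasurableSpace E] {μ : Measure Ω} {ν : Measure E} [IsProbabilityMeasure ν]
    {V : ι → Ω → E} (hVm : ∀ k, Measurable (V k)) (hindep : iIndepFun V μ)
    (hident : ∀ k, μ.map (V k) = ν) {A : β → Set E} (hA : ∀ b, MeasurableSet (A b))
    (B : Finset β) (S : Finset ι) {ρ : ℝ} (hρ : ∀ b ∈ B, ρ ≤ ν.real (A b)) :
    μ.real (⋃ b ∈ B, ⋂ k ∈ S, V k ⁻¹' (A b)ᶜ) ≤ B.card * (1 - ρ) ^ S.card := by
  calc μ.real (⋃ b ∈ B, ⋂ k ∈ S, V k ⁻¹' (A b)ᶜ)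
      ≤ ∑ b ∈ B, μ.real (⋂ k ∈ S, V k ⁻¹' (A b)ᶜ) := measureReal_biUnion_finset_le B _
    _ = ∑ b ∈ B, (1 - ν.real (A b)) ^ S.card := Finset.sum_congr rfl fun b _ =>
        measureReal_biInter_preimage_compl_eq_pow hVm hindep hident (hA b) S
    _ ≤ ∑ _b ∈ B, (1 - ρ) ^ S.card := Finset.sum_le_sum fun b hb =>
        pow_le_pow_left₀ (sub_nonneg.2 measureReal_le_one) (by linarith [hρ b hb]) _
    _ = B.card * (1 - ρ) ^ S.card := by rw [Finset.sum_const, nsmul_eq_mul]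

theorem box_subset_convexHull_range {p n : ℕ} (c : Fin p → ℝ) (ε : ℝ) (v : ℕ → Fin p → ℝ)
    (hv : ∀ b ∈ signVectors p, ∃ k ∈ Finset.range n, v k ∈ signBox c ε b) :
    {x : Fin p → ℝ | ∀ j, |x j - c j| ≤ ε} ⊆ convexHull ℝ (Set.range fun k : Fin n => v k) :=
  box_subset_convexHull c ε (Set.finite_range _) fun b hb =>
    let ⟨k, hk, hkb⟩ := hv b hb
    ⟨v k, ⟨⟨k, Finset.mem_range.1 hk⟩, rfl⟩, hkb⟩

theorem stmt_14_general {Ω : Type*} [MeasurableSpace Ω] (μ : Measure Ω) [IsProbabilityMeasure μ]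
    {p : ℕ} (V : ℕ → Ω → (Fin p → ℝ)) (hVm : ∀ k, Measurable (V k))
    (ν : Measure (Fin p → ℝ)) [IsProbabilityMeasure ν]
    (hindep : iIndepFun V μ)
    (hident : ∀ k, μ.map (V k) = ν)
    (cstar : Fin p → ℝ) (ε : ℝ) (ρ : ℝ) (hρ : 0 < ρ)
    (hρle : ∀ b : Fin p → ℝ, (∀ j, b j = -1 ∨ b j = 0 ∨ b j = 1) →
      ρ ≤ (ν {x | ∀ j, |x j - (cstar j + 3 / 2 * ε * b j)| ≤ ε / 2}).toReal) :
    (∀ n : ℕ, 1 - (3 : ℝ) ^ p * (1 - ρ) ^ n ≤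
      (μ {ω | {x : Fin p → ℝ | ∀ j, |x j - cstar j| ≤ ε} ⊆
        convexHull ℝ (Set.range (fun k : Fin n => V k ω))}).toReal)
    ∧ Tendsto (fun n : ℕ =>
        (μ {ω | {x : Fin p → ℝ | ∀ j, |x j - cstar j| ≤ ε} ⊆
          convexHull ℝ (Set.range (fun k : Fin n => V k ω))}).toReal)
        atTop (nhds 1) := by
  have hbound (n : ℕ) : 1 - (3 : ℝ) ^ p * (1 - ρ) ^ n ≤
      μ.real {ω | {x : Fin p → ℝ | ∀ j, |x j - cstar j| ≤ ε} ⊆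
        convexHull ℝ (Set.range (fun k : Fin n => V k ω))} := by
    have hmiss := measureReal_biUnion_biInter_preimage_compl_le hVm hindep hident
      (measurableSet_signBox cstar ε) _ (Finset.range n) fun b hb => hρle b (mem_signVectors.1 hb)
    rw [card_signVectors, Finset.card_range, Nat.cast_pow, Nat.cast_ofNat] at hmiss
    set miss := ⋃ b ∈ signVectors p, ⋂ k ∈ Finset.range n, V k ⁻¹' (signBox cstar ε b)ᶜ
    have hcover : Set.univ ⊆ {ω | {x : Fin p → ℝ | ∀ j, |x j - cstar j| ≤ ε} ⊆
        convexHull ℝ (Set.range (fun k : Fin n => V k ω))} ∪ miss := by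
      exact fun ω _ => or_iff_not_imp_right.2 fun hω =>
        box_subset_convexHull_range cstar ε (V · ω) (by simpa [miss] using hω)
    have := (measureReal_mono (μ := μ) hcover).trans (measureReal_union_le _ _)
    rw [probReal_univ] at this
    linarith
  have hρ1 : ρ ≤ 1 := (hρle 0 fun _ => Or.inr (Or.inl rfl)).trans measureReal_le_one
  have hlow : Tendsto (fun n : ℕ => 1 - (3 : ℝ) ^ p * (1 - ρ) ^ n) atTop (nhds 1) := by
    simpa using tendsto_const_nhds.sub (tendsto_const_nhds.mul
      (tendsto_pow_atTop_nhds_zero_of_lt_one (sub_nonneg.2 hρ1) (sub_lt_self 1 hρ)))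
  exact ⟨hbound, tendsto_of_tendsto_of_tendsto_of_le_of_le hlow tendsto_const_nhds hbound
    fun n => measureReal_le_one⟩

/-- if `V 0, V 1, …` are i.i.d. random vectors in `ℝ^p` with law `ν`
giving mass at least `ρ > 0` to each of the `3^p` sup-norm boxes of radius `ε/2`
centered at `c* + (3/2)ε b`, `b ∈ {-1,0,1}^p`, then the probability that the convex
hull of `V 0, …, V (n-1)` contains the sup-norm box `B_ε(c*)` is at least
`1 - 3^p (1-ρ)^n`, and in particular tends to `1` as `n → ∞`. -/
theorem stmt_14 {Ω : Type*} [MeasurableSpace Ω] (μ : Measure Ω) [IsProbabilityMeasure μ]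
    {p : ℕ} (V : ℕ → Ω → (Fin p → ℝ)) (hVm : ∀ k, Measurable (V k))
    (ν : Measure (Fin p → ℝ)) [IsProbabilityMeasure ν]
    (hindep : iIndepFun V μ)
    (hident : ∀ k, μ.map (V k) = ν)
    (cstar : Fin p → ℝ) (ε : ℝ) (hε : 0 < ε) (ρ : ℝ) (hρ : 0 < ρ)
    (hρle : ∀ b : Fin p → ℝ, (∀ j, b j = -1 ∨ b j = 0 ∨ b j = 1) →
      ρ ≤ (ν {x | ∀ j, |x j - (cstar j + 3 / 2 * ε * b j)| ≤ ε / 2}).toReal) :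
    (∀ n : ℕ, 1 - (3 : ℝ) ^ p * (1 - ρ) ^ n ≤
      (μ {ω | {x : Fin p → ℝ | ∀ j, |x j - cstar j| ≤ ε} ⊆
        convexHull ℝ (Set.range (fun k : Fin n => V k ω))}).toReal)
    ∧ Tendsto (fun n : ℕ =>
        (μ {ω | {x : Fin p → ℝ | ∀ j, |x j - cstar j| ≤ ε} ⊆
          convexHull ℝ (Set.range (fun k : Fin n => V k ω))}).toReal)
        atTop (nhds 1) :=
  stmt_14_general μ V hVm ν hindep hident cstar ε ρ hρ hρle
end

section
/- Let $(X_i, T_i)$, $i = 1, 2, \dots$, be independent identically distributed, with $T_i \in \{0,1\}$ and moment map $c : \mathcal{X} \to \mathbb{R}^p$ with $\mathbb{E}\|c(X)\| < \infty$ and $0 < P(T=1) < 1$. Set $c^* = \mathbb{E}[c(X) \mid T=1]$ and suppose there exists $\epsilon > 0$ such that every box $R_b$ of sup-norm radius $\epsilon/2$ centered at $c^* + \tfrac{3}{2}\epsilon\, b$, $b \in \{-1,0,1\}^p$, has positive probability under the conditional law of $c(X)$ given $T = 0$ (which holds under the overlap assumption $0 < P(T=1|X) < 1$). Then the probability that the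 Entropy Balancing constraints are solvable — i.e., that there exist weights $w_i > 0$ with $\sum_{T_i = 0, i \le n} w_i = 1$ and $\sum_{T_i = 0, i \le n} w_i\, c(X_i) = \frac{1}{n_1}\sum_{T_i = 1, i \le n} c(X_i)$ — tends to $1$ as $n \to \infty$. -/
/-!
Almost surely, by the strong law of large numbers, the treated moment average converges to `c*`
and, for every sign vector `b`, some control moment eventually falls into the box `R_b`. Such
representatives surround `c*`: a linear functional `f` separating a point `z` near `c*` from their
convex hull would satisfy `f (y_b) ≥ f z` at the corner `b = sign f`. So the treated average is
eventually in the interior of the convex hull of the control moments, and interior points are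
convex combinations with strictly positive weights (mix in a little of the barycenter). Almost
sure eventual solvability forces its probability to tend to one.
-/

open MeasureTheory ProbabilityTheory Filter Finset Topology

section ConvexWeights

variable {ι E : Type*} [AddCommGroup E] [Module ℝ E]

theorem exists_weights_of_mem_convexHull_image {S : Finset ι} {x : ι → E} {z : E}
    (hz : z ∈ convexHull ℝ (x '' S)) :
    ∃ w : ι → ℝ, (∀ i ∈ S, 0 ≤ w i) ∧ ∑ i ∈ S, w i = 1 ∧ ∑ i ∈ S, w i • x i = z := by
  classical
  suffices h : convexHull ℝ (x '' S) ⊆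
      {z | ∃ w : ι → ℝ, (∀ i ∈ S, 0 ≤ w i) ∧ ∑ i ∈ S, w i = 1 ∧ ∑ i ∈ S, w i • x i = z} from h hz
  refine convexHull_min ?_ ?_
  · rintro _ ⟨i, hi, rfl⟩
    rw [Finset.mem_coe] at hi
    refine ⟨Pi.single i 1, fun j _ => ?_, by simp [hi], by simp [Pi.single_apply, hi]⟩
    by_cases h : j = i <;> simp [h]
  · rintro _ ⟨w, hw0, hw1, rfl⟩ _ ⟨v, hv0, hv1, rfl⟩ a b ha hb hab
    refine ⟨a • w + b • v, fun i hi => ?_, ?_, ?_⟩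
    · simp only [Pi.add_apply, Pi.smul_apply, smul_eq_mul]
      exact add_nonneg (mul_nonneg ha (hw0 i hi)) (mul_nonneg hb (hv0 i hi))
    · simp only [Pi.add_apply, Pi.smul_apply, smul_eq_mul, sum_add_distrib, ← mul_sum, hw1, hv1,
        mul_one, hab]
    · simp only [Pi.add_apply, Pi.smul_apply, smul_eq_mul, add_smul, mul_smul, sum_add_distrib,
        smul_sum]

variable [TopologicalSpace E] [ContinuousAdd E] [ContinuousSMul ℝ E]

/-- Pushing `z` slightly away from the barycenter `m` of the `x i` stays in the hull, and `z` is
then a convex combination of that point and `m`, whose weights are all positive. -/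
theorem exists_pos_weights_of_mem_interior_convexHull {S : Finset ι} {x : ι → E} {z : E}
    (hz : z ∈ interior (convexHull ℝ (x '' S))) :
    ∃ w : ι → ℝ, (∀ i ∈ S, 0 < w i) ∧ ∑ i ∈ S, w i = 1 ∧ ∑ i ∈ S, w i • x i = z := by
  have hS : S.Nonempty := by
    rw [Finset.nonempty_iff_ne_empty]
    rintro rfl
    simp at hz
  have hN : (0 : ℝ) < S.card := by exact_mod_cast hS.card_pos
  set m : E := (S.card : ℝ)⁻¹ • ∑ i ∈ S, x i
  have hpush : ∀ᶠ t in 𝓝 (0 : ℝ), z + t • (z - m) ∈ convexHull ℝ (x '' S) := by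
    have hcont : Tendsto (fun t : ℝ => z + t • (z - m)) (𝓝 0) (𝓝 z) :=
      (by fun_prop : Continuous fun t : ℝ => z + t • (z - m)).tendsto' 0 z (by simp)
    exact (hcont.eventually (isOpen_interior.mem_nhds hz)).mono fun t ht => interior_subset ht
  obtain ⟨t, ht, ht0 : 0 < t⟩ := ((hpush.filter_mono nhdsWithin_le_nhds).and
    (self_mem_nhdsWithin (s := Set.Ioi (0 : ℝ)))).exists
  obtain ⟨v, hv0, hv1, hvz⟩ := exists_weights_of_mem_convexHull_image ht
  refine ⟨fun i => (1 + t)⁻¹ * (v i + t / S.card), fun i hi => ?_, ?_, ?_⟩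
  · have := hv0 i hi
    positivity
  · rw [← mul_sum, sum_add_distrib, hv1, sum_const, nsmul_eq_mul]
    field_simp
  · have hm : (t / S.card) • ∑ i ∈ S, x i = t • m := by
      simp only [m, smul_smul, div_eq_mul_inv]
    simp only [mul_smul, add_smul, ← smul_sum, sum_add_distrib, hvz, hm]
    rw [show z + t • (z - m) + t • m = (1 + t) • z by module, smul_smul,
      inv_mul_cancel₀ (by positivity), one_smul]

end ConvexWeights

theorem mul_sub_nonneg_of_abs_sub_sign_le {a c y z r s : ℝ} (hrs : 2 * r ≤ s)
    (hy : |y - (c + s * SignType.sign a)| ≤ r) (hz : |z - c| < r) : 0 ≤ (y - z) * a := by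
  rw [abs_le] at hy
  rw [abs_lt] at hz
  rcases lt_trichotomy a 0 with ha | rfl | ha
  · simp only [sign_neg ha, SignType.coe_neg, SignType.coe_one] at hy
    nlinarith
  · simp
  · simp only [sign_pos ha, SignType.coe_one] at hy
    nlinarith

theorem ball_subset_interior_convexHull_of_forall_sign {ι : Type*} [Fintype ι] {c : ι → ℝ}
    {r s : ℝ} (hrs : 2 * r ≤ s) {y : (ι → SignType) → ι → ℝ}
    (hy : ∀ b j, |y b j - (c j + s * b j)| ≤ r) :
    Metric.ball c r ⊆ interior (convexHull ℝ (Set.range y)) := by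
  classical
  rw [Metric.isOpen_ball.subset_interior_iff]
  intro z hz
  have hr : 0 < r := lt_of_le_of_lt dist_nonneg hz
  have hzc : ∀ j, |z j - c j| < r := fun j => by
    simpa [Real.dist_eq] using (dist_pi_lt_iff hr).1 hz j
  by_contra hzy
  obtain ⟨f, u, hfu, huz⟩ := geometric_hahn_banach_closed_point (convex_convexHull ℝ _)
    ((Set.finite_range y).isCompact_convexHull (𝕜 := ℝ)).isClosed hzy
  set a : ι → ℝ := fun i => f fun j => if i = j then 1 else 0
  set b : ι → SignType := fun j => SignType.sign (a j)
  have hle : f z ≤ f (y b) := by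
    rw [← sub_nonneg, ← map_sub, ← f.coe_coe, LinearMap.pi_apply_eq_sum_univ]
    exact sum_nonneg fun j _ => mul_sub_nonneg_of_abs_sub_sign_le hrs (hy b j) (hzc j)
  exact (hfu _ (subset_convexHull ℝ _ ⟨b, rfl⟩)).not_ge (huz.le.trans hle)

theorem exists_pos_weights_of_forall_sign {κ ι : Type*} [Fintype ι] {S : Finset κ}
    {x : κ → ι → ℝ} {c z : ι → ℝ} {r s : ℝ} (hrs : 2 * r ≤ s)
    (hcorner : ∀ b : ι → SignType, ∃ i ∈ S, ∀ j, |x i j - (c j + s * b j)| ≤ r)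
    (hz : dist z c < r) :
    ∃ w : κ → ℝ, (∀ i ∈ S, 0 < w i) ∧ ∑ i ∈ S, w i = 1 ∧ ∑ i ∈ S, w i • x i = z := by
  choose rep hrepS hrep using hcorner
  have hrange : Set.range (fun b => x (rep b)) ⊆ x '' S := by
    rintro _ ⟨b, rfl⟩
    exact ⟨rep b, hrepS b, rfl⟩
  exact exists_pos_weights_of_mem_interior_convexHull <| interior_mono (convexHull_mono hrange)
    (ball_subset_interior_convexHull_of_forall_sign hrs hrep hz)

theorem tendsto_measure_of_ae_eventually_mem {Ω : Type*} [MeasurableSpace Ω] {μ : Measure Ω}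
    {A : ℕ → Set Ω} (h : ∀ᵐ ω ∂μ, ∀ᶠ n in atTop, ω ∈ A n) :
    Tendsto (fun n => μ (A n)) atTop (𝓝 (μ Set.univ)) := by
  set C : ℕ → Set Ω := fun n => {ω | ∀ m ≥ n, ω ∈ A m}
  have hC : Monotone C := fun n n' hnn' ω hω m hm => hω m (hnn'.trans hm)
  have hCuniv : μ (⋃ n, C n) = μ Set.univ := by
    refine measure_congr (ae_eq_univ.2 (measure_mono_null (fun ω hω => ?_) (ae_iff.1 h)))
    rw [Set.mem_compl_iff, Set.mem_iUnion, not_exists] at hω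
    simpa [eventually_atTop, C] using hω
  refine tendsto_of_tendsto_of_tendsto_of_le_of_le (g := μ ∘ C) ?_ tendsto_const_nhds
    (fun n => measure_mono fun ω hω => hω n le_rfl) (fun n => measure_mono (Set.subset_univ _))
  simpa [hCuniv] using tendsto_measure_iUnion_atTop (μ := μ) hC

theorem integral_cond_eq_inv_smul_setIntegral {Ω E : Type*} [MeasurableSpace Ω]
    [NormedAddCommGroup E] [NormedSpace ℝ E] (μ : Measure Ω) (s : Set Ω) (f : Ω → E) :
    ∫ ω, f ω ∂μ[|s] = (μ.real s)⁻¹ • ∫ ω in s, f ω ∂μ := by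
  simp only [ProbabilityTheory.cond, integral_smul_measure, ENNReal.toReal_inv, ← measureReal_def]

section StrongLaw

variable {Ω α E : Type*} [MeasurableSpace Ω] [MeasurableSpace α] {μ : Measure Ω}
  [NormedAddCommGroup E] [NormedSpace ℝ E] [CompleteSpace E] [MeasurableSpace E] [BorelSpace E]
  {Y : ℕ → Ω → α}

theorem strong_law_ae_comp (hindep : iIndepFun Y μ) (hident : ∀ i, IdentDistrib (Y i) (Y 0) μ μ)
    {φ : α → E} (hφ : Measurable φ) (hint : Integrable (φ ∘ Y 0) μ) :
    ∀ᵐ ω ∂μ, Tendsto (fun n : ℕ => (n : ℝ)⁻¹ • ∑ i ∈ range n, φ (Y i ω)) atTop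
      (𝓝 (∫ ω, φ (Y 0 ω) ∂μ)) :=
  strong_law_ae (fun i => φ ∘ Y i) hint (fun _ _ hij => (hindep.indepFun hij).comp hφ hφ)
    fun i => (hident i).comp hφ

theorem strong_law_ae_indicator_one [IsFiniteMeasure μ] (hY : Measurable (Y 0))
    (hindep : iIndepFun Y μ) (hident : ∀ i, IdentDistrib (Y i) (Y 0) μ μ) {A : Set α}
    (hA : MeasurableSet A) :
    ∀ᵐ ω ∂μ, Tendsto (fun n : ℕ => (n : ℝ)⁻¹ • ∑ i ∈ range n, A.indicator 1 (Y i ω)) atTop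
      (𝓝 (μ.real (Y 0 ⁻¹' A))) := by
  have hcomp : A.indicator (1 : α → ℝ) ∘ Y 0 = (Y 0 ⁻¹' A).indicator 1 :=
    funext fun _ => (Set.indicator_comp_right (Y 0)).symm
  have hint : Integrable (A.indicator (1 : α → ℝ) ∘ Y 0) μ := by
    rw [hcomp]
    exact (integrable_const 1).indicator (hY hA)
  have hmean : ∫ ω, A.indicator (1 : α → ℝ) (Y 0 ω) ∂μ = μ.real (Y 0 ⁻¹' A) := by
    rw [← integral_indicator_one (hY hA)]
    exact congrArg (integral μ) hcomp
  simpa only [hmean] using strong_law_ae_comp hindep hident (measurable_one.indicator hA) hint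

theorem ae_eventually_exists_mem_of_measure_ne_zero [IsFiniteMeasure μ] (hY : Measurable (Y 0))
    (hindep : iIndepFun Y μ) (hident : ∀ i, IdentDistrib (Y i) (Y 0) μ μ) {D : Set α}
    (hD : MeasurableSet D) (hpos : μ (Y 0 ⁻¹' D) ≠ 0) :
    ∀ᵐ ω ∂μ, ∀ᶠ n in atTop, ∃ i < n, Y i ω ∈ D := by
  have hq : 0 < μ.real (Y 0 ⁻¹' D) := ENNReal.toReal_pos hpos (measure_ne_top μ _)
  filter_upwards [strong_law_ae_indicator_one hY hindep hident hD] with ω hω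
  filter_upwards [hω.eventually (lt_mem_nhds hq)] with n hn
  obtain ⟨i, hi, hne⟩ := exists_ne_zero_of_sum_ne_zero (smul_ne_zero_iff.1 hn.ne').2
  exact ⟨i, mem_range.1 hi, Set.mem_of_indicator_ne_zero hne⟩

/-- The filtered average is the ratio of two ordinary strong-law averages. -/
theorem tendsto_average_filter_ae [IsFiniteMeasure μ] (hY : Measurable (Y 0))
    (hindep : iIndepFun Y μ) (hident : ∀ i, IdentDistrib (Y i) (Y 0) μ μ) {A : Set α}
    [DecidablePred (· ∈ A)] (hA : MeasurableSet A) (hpos : μ (Y 0 ⁻¹' A) ≠ 0) {g : α → E}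
    (hg : Measurable g) (hint : Integrable (g ∘ Y 0) μ) :
    ∀ᵐ ω ∂μ, Tendsto (fun n : ℕ => ((#{i ∈ range n | Y i ω ∈ A} : ℕ) : ℝ)⁻¹ •
        ∑ i ∈ range n with Y i ω ∈ A, g (Y i ω)) atTop (𝓝 (∫ ω, g (Y 0 ω) ∂μ[|Y 0 ⁻¹' A])) := by
  have hq : μ.real (Y 0 ⁻¹' A) ≠ 0 := (ENNReal.toReal_pos hpos (measure_ne_top μ _)).ne'
  have hcomp : A.indicator g ∘ Y 0 = (Y 0 ⁻¹' A).indicator (g ∘ Y 0) :=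
    funext fun _ => (Set.indicator_comp_right (Y 0)).symm
  have hint' : Integrable (A.indicator g ∘ Y 0) μ := by
    rw [hcomp]
    exact hint.indicator (hY hA)
  have hmean : ∫ ω, A.indicator g (Y 0 ω) ∂μ = ∫ ω in Y 0 ⁻¹' A, g (Y 0 ω) ∂μ := by
    rw [← integral_indicator (hY hA)]
    exact congrArg (integral μ) hcomp
  filter_upwards [strong_law_ae_indicator_one hY hindep hident hA,
    strong_law_ae_comp hindep hident (hg.indicator hA) hint'] with ω hcount hsum
  rw [integral_cond_eq_inv_smul_setIntegral, ← hmean]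
  refine ((hcount.inv₀ hq).smul hsum).congr' ?_
  filter_upwards [eventually_ne_atTop 0] with n hn
  have hcard : ∑ i ∈ range n, A.indicator (1 : α → ℝ) (Y i ω) = #{i ∈ range n | Y i ω ∈ A} := by
    simp [Set.indicator_apply, sum_boole]
  have hfilter :
      ∑ i ∈ range n, A.indicator g (Y i ω) = ∑ i ∈ range n with Y i ω ∈ A, g (Y i ω) := by
    simp [Set.indicator_apply, sum_filter]
  have hn' : (n : ℝ) ≠ 0 := Nat.cast_ne_zero.2 hn
  rw [hcard, hfilter, smul_smul, smul_eq_mul]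
  congr 1
  field_simp

end StrongLaw

theorem stmt_15_general {Ω 𝓧 : Type*} [m0 : MeasurableSpace Ω] [MeasurableSpace 𝓧]
    (μ : Measure Ω) [IsProbabilityMeasure μ]
    (X : ℕ → Ω → 𝓧) (T : ℕ → Ω → Bool)
    (hXm : ∀ i, Measurable (X i)) (hTm : ∀ i, Measurable (T i))
    (hindep : iIndepFun (fun i ω => (X i ω, T i ω)) μ)
    (hident : ∀ i, μ.map (fun ω => (X i ω, T i ω)) = μ.map (fun ω => (X 0 ω, T 0 ω)))
    {p : ℕ} (c : 𝓧 → Fin p → ℝ) (hc : Measurable c)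
    (hcint : Integrable (fun ω => c (X 0 ω)) μ)
    (hT1 : μ {ω | T 0 ω = true} ≠ 0)
    (cstar : Fin p → ℝ)
    (hcstar : ∀ j, cstar j = ∫ ω, c (X 0 ω) j ∂(μ[|{ω | T 0 ω = true}]))
    (ε : ℝ) (hε : 0 < ε)
    (hbox : ∀ b : Fin p → ℝ, (∀ j, b j = -1 ∨ b j = 0 ∨ b j = 1) →
      0 < μ[|{ω | T 0 ω = false}]
        {ω | ∀ j, |c (X 0 ω) j - (cstar j + 3 / 2 * ε * b j)| ≤ ε / 2}) :
    Tendsto (fun n => μ {ω | ∃ w : ℕ → ℝ,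
        (∀ i ∈ (Finset.range n).filter (fun i => T i ω = false), 0 < w i) ∧
        (∑ i ∈ (Finset.range n).filter (fun i => T i ω = false), w i = 1) ∧
        (∀ j, ∑ i ∈ (Finset.range n).filter (fun i => T i ω = false), w i * c (X i ω) j
          = ((((Finset.range n).filter (fun i => T i ω = true)).card : ℝ))⁻¹ *
            ∑ i ∈ (Finset.range n).filter (fun i => T i ω = true), c (X i ω) j)})
      atTop (nhds 1) := by
  set Y : ℕ → Ω → 𝓧 × Bool := fun i ω => (X i ω, T i ω)
  have hY : ∀ i, Measurable (Y i) := fun i => (hXm i).prodMk (hTm i)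
  have hidentY : ∀ i, IdentDistrib (Y i) (Y 0) μ μ := fun i =>
    ⟨(hY i).aemeasurable, (hY 0).aemeasurable, hident i⟩
  set box : (Fin p → SignType) → Set (𝓧 × Bool) := fun b =>
    {q | q.2 = false ∧ ∀ j, |c q.1 j - (cstar j + 3 / 2 * ε * b j)| ≤ ε / 2}
  have hbox_meas : ∀ b, MeasurableSet (box b) := fun b => measurableSet_setOfPred.2 (by fun_prop)
  have hbox_pos : ∀ b, μ (Y 0 ⁻¹' box b) ≠ 0 := fun b =>
    (inter_pos_of_cond_ne_zero ((hTm 0) (measurableSet_singleton false))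
      (hbox (fun j => b j) fun j => by cases b j <;> simp).ne').ne'
  have hcstar_eq : ∫ ω, c (Y 0 ω).1 ∂μ[|Y 0 ⁻¹' {q | q.2 = true}] = cstar := by
    have hint : Integrable (fun ω => c (X 0 ω)) μ[|{ω | T 0 ω = true}] :=
      hcint.restrict.smul_measure (ENNReal.inv_ne_top.2 hT1)
    exact funext fun j => (eval_integral (integrable_pi_iff.1 hint) j).trans (hcstar j).symm
  rw [← measure_univ (μ := μ)]
  refine tendsto_measure_of_ae_eventually_mem ?_
  filter_upwards [tendsto_average_filter_ae (hY 0) hindep hidentY (A := {q | q.2 = true})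
      (measurable_snd (measurableSet_singleton true)) hT1 (g := fun q => c q.1)
      (hc.comp measurable_fst) hcint,
    ae_all_iff.2 fun b => ae_eventually_exists_mem_of_measure_ne_zero (hY 0) hindep hidentY
      (hbox_meas b) (hbox_pos b)] with ω htreated hcontrols
  rw [hcstar_eq] at htreated
  filter_upwards [htreated.eventually (Metric.ball_mem_nhds cstar (half_pos hε)),
    eventually_all.2 hcontrols] with n hball hn
  obtain ⟨w, hw_pos, hw_sum, hw_avg⟩ := exists_pos_weights_of_forall_sign
    (S := {i ∈ range n | T i ω = false}) (x := fun i => c (X i ω))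
    (by linarith : 2 * (ε / 2) ≤ 3 / 2 * ε)
    (fun b => by
      obtain ⟨i, hi, hT, hbox⟩ := hn b
      exact ⟨i, mem_filter.2 ⟨mem_range.2 hi, hT⟩, hbox⟩)
    hball
  exact ⟨w, hw_pos, hw_sum, fun j => by simpa using congrFun hw_avg j⟩

/-- Proposition 1, first part: with `(X i, T i)` i.i.d., `c(X)`
integrable, `0 < P(T=1) < 1`, and every sup-norm box of radius `ε/2` centered at
`c* + (3/2)ε b` (`b ∈ {-1,0,1}^p`, `c* = E[c(X)∣T=1]`) having positive conditional
probability given `T = 0`, the probability that the Entropy Balancing constraints are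
solvable — there exist strictly positive control weights summing to one whose weighted
control moment average equals the treated moment average — tends to `1` as `n → ∞`. -/
theorem stmt_15 {Ω 𝓧 : Type*} [m0 : MeasurableSpace Ω] [MeasurableSpace 𝓧]
    (μ : Measure Ω) [IsProbabilityMeasure μ]
    (X : ℕ → Ω → 𝓧) (T : ℕ → Ω → Bool)
    (hXm : ∀ i, Measurable (X i)) (hTm : ∀ i, Measurable (T i))
    (hindep : iIndepFun (fun i ω => (X i ω, T i ω)) μ)
    (hident : ∀ i, μ.map (fun ω => (X i ω, T i ω)) = μ.map (fun ω => (X 0 ω, T 0 ω)))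
    {p : ℕ} (c : 𝓧 → Fin p → ℝ) (hc : Measurable c)
    (hcint : Integrable (fun ω => c (X 0 ω)) μ)
    (hT1 : μ {ω | T 0 ω = true} ≠ 0) (hT0 : μ {ω | T 0 ω = false} ≠ 0)
    (cstar : Fin p → ℝ)
    (hcstar : ∀ j, cstar j = ∫ ω, c (X 0 ω) j ∂(μ[|{ω | T 0 ω = true}]))
    (ε : ℝ) (hε : 0 < ε)
    (hbox : ∀ b : Fin p → ℝ, (∀ j, b j = -1 ∨ b j = 0 ∨ b j = 1) →
      0 < μ[|{ω | T 0 ω = false}]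
        {ω | ∀ j, |c (X 0 ω) j - (cstar j + 3 / 2 * ε * b j)| ≤ ε / 2}) :
    Tendsto (fun n => μ {ω | ∃ w : ℕ → ℝ,
        (∀ i ∈ (Finset.range n).filter (fun i => T i ω = false), 0 < w i) ∧
        (∑ i ∈ (Finset.range n).filter (fun i => T i ω = false), w i = 1) ∧
        (∀ j, ∑ i ∈ (Finset.range n).filter (fun i => T i ω = false), w i * c (X i ω) j
          = ((((Finset.range n).filter (fun i => T i ω = true)).card : ℝ))⁻¹ *
            ∑ i ∈ (Finset.range n).filter (fun i => T i ω = true), c (X i ω) j)})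
      atTop (nhds 1) :=
  stmt_15_general (m0 := m0) μ X T hXm hTm hindep hident c hc hcint hT1 cstar hcstar ε hε hbox
end
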